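/- arXiv:2505.09560 — 5 statements merged into one kernel-verified Lean document; each statement's English description precedes it below -/
import Mathlib

section
/- Under uniform s-contractivity of the maps τ_λ (s < 1), for every nonempty compact B ⊆ X and every k ≥ 0, the Hausdorff distance h(F^k(B), A) ≤ (s^k/(1−s)) h(F(B), B), where A is the attractor; in particular h(B, A) ≤ h(F(B),B)/(1−s) (the Collage inequality). -/
open Metric

/-- Collage-type inequalities: under uniform `s`-contractivity (`0 < s < 1`) of the maps
`τ_λ`, if `A` is the attractor (the fixed point of the Hutchinson operator `F`), then for
every nonempty compact `B` and every `k`,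
`h(F^k(B), A) ≤ s^k/(1-s) · h(F(B), B)`, and in particular
`h(B, A) ≤ h(F(B), B)/(1-s)`. -/
theorem collage_inequality
    {X Λ : Type*} [MetricSpace X] [CompactSpace X] [MetricSpace Λ] [CompactSpace Λ]
    (τ : Λ → X → X) (hτ : Continuous fun p : Λ × X => τ p.1 p.2)
    (s : ℝ) (hs0 : 0 < s) (hs1 : s < 1)
    (hcontr : ∀ (lam : Λ) (x y : X), dist (τ lam x) (τ lam y) ≤ s * dist x y)
    (F : Set X → Set X) (hF : F = fun B => ⋃ lam : Λ, τ lam '' B)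
    (A : Set X) (hA : IsCompact A) (hAne : A.Nonempty) (hfix : F A = A)
    (B : Set X) (hB : IsCompact B) (hBne : B.Nonempty) :
    (∀ k : ℕ, hausdorffDist (F^[k] B) A ≤ (s ^ k / (1 - s)) * hausdorffDist (F B) B) ∧
    hausdorffDist B A ≤ hausdorffDist (F B) B / (1 - s) := by
  -- Λ is nonempty
  obtain ⟨a, ha⟩ := hAne
  have haF : a ∈ F A := by rw [hfix]; exact ha
  have hΛ : Nonempty Λ := by
    rw [hF] at haF
    obtain ⟨lam, -⟩ := Set.mem_iUnion.1 haF
    exact ⟨lam⟩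
  -- F preserves compactness
  have hFcomp : ∀ S : Set X, IsCompact S → IsCompact (F S) := by
    intro S hS
    have heq : F S = (fun p : Λ × X => τ p.1 p.2) '' (Set.univ ×ˢ S) := by
      rw [hF]
      ext x
      simp only [Set.mem_iUnion, Set.mem_image, Set.mem_prod, Set.mem_univ, true_and,
        Prod.exists]
    rw [heq]
    exact (isCompact_univ.prod hS).image hτ
  -- F preserves nonemptiness
  have hFne : ∀ S : Set X, S.Nonempty → (F S).Nonempty := by
    intro S ⟨x, hx⟩
    obtain ⟨lam⟩ := hΛ
    rw [hF]
    exact ⟨τ lam x, Set.mem_iUnion.2 ⟨lam, Set.mem_image_of_mem _ hx⟩⟩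
  -- hausdorffEdist never ⊤ (compact ambient space)
  have netop : ∀ S T : Set X, S.Nonempty → T.Nonempty → EMetric.hausdorffEdist S T ≠ ⊤ := by
    intro S T hSne hTne
    exact hausdorffEdist_ne_top_of_nonempty_of_bounded hSne hTne
      isBounded_of_compactSpace isBounded_of_compactSpace
  -- one-sided estimate
  have key : ∀ S T : Set X, IsCompact T → T.Nonempty →
      ∀ x ∈ F S, ∃ y ∈ F T, dist x y ≤ s * hausdorffDist S T := by
    intro S T hT hTne x hx
    rw [hF] at hx
    simp only [Set.mem_iUnion, Set.mem_image] at hx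
    obtain ⟨lam, b, hb, rfl⟩ := hx
    obtain ⟨c, hc, hdc⟩ := hT.exists_infDist_eq_dist hTne b
    have hSne : S.Nonempty := ⟨b, hb⟩
    refine ⟨τ lam c, ?_, ?_⟩
    · rw [hF]; exact Set.mem_iUnion.2 ⟨lam, Set.mem_image_of_mem _ hc⟩
    · calc dist (τ lam b) (τ lam c) ≤ s * dist b c := hcontr lam b c
        _ ≤ s * hausdorffDist S T := by
            apply mul_le_mul_of_nonneg_left _ hs0.le
            rw [← hdc]
            exact infDist_le_hausdorffDist_of_mem hb (netop S T hSne hTne)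
  -- F is a contraction for the Hausdorff distance
  have contr : ∀ S T : Set X, IsCompact S → S.Nonempty → IsCompact T → T.Nonempty →
      hausdorffDist (F S) (F T) ≤ s * hausdorffDist S T := by
    intro S T hS hSne hT hTne
    have h0 : 0 ≤ s * hausdorffDist S T := mul_nonneg hs0.le hausdorffDist_nonneg
    apply hausdorffDist_le_of_mem_dist h0
    · exact key S T hT hTne
    · intro y hy
      obtain ⟨x, hx, hxy⟩ := key T S hS hSne y hy
      refine ⟨x, hx, ?_⟩
      rw [show hausdorffDist S T = hausdorffDist T S from hausdorffDist_comm]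
      exact hxy
  -- iterates stay compact and nonempty
  have hiter : ∀ k, IsCompact (F^[k] B) ∧ (F^[k] B).Nonempty := by
    intro k
    induction k with
    | zero => exact ⟨hB, hBne⟩
    | succ n ih =>
      rw [Function.iterate_succ_apply']
      exact ⟨hFcomp _ ih.1, hFne _ ih.2⟩
  have hAne' : A.Nonempty := ⟨a, ha⟩
  have h2 : hausdorffDist (F B) A ≤ s * hausdorffDist B A := by
    calc hausdorffDist (F B) A = hausdorffDist (F B) (F A) := by rw [hfix]
      _ ≤ s * hausdorffDist B A := contr B A hB hBne hA hAne'
  have h1 : hausdorffDist B A ≤ hausdorffDist B (F B) + hausdorffDist (F B) A :=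
    hausdorffDist_triangle (netop B (F B) hBne (hFne B hBne))
  have hcomm : hausdorffDist B (F B) = hausdorffDist (F B) B := hausdorffDist_comm
  have hbound : hausdorffDist B A ≤ hausdorffDist (F B) B / (1 - s) := by
    rw [le_div_iff₀ (by linarith)]
    nlinarith
  have hk : ∀ k, hausdorffDist (F^[k] B) A ≤ s ^ k * hausdorffDist B A := by
    intro k
    induction k with
    | zero => simp
    | succ n ih =>
      rw [Function.iterate_succ_apply']
      calc hausdorffDist (F (F^[n] B)) A = hausdorffDist (F (F^[n] B)) (F A) := by rw [hfix]
        _ ≤ s * hausdorffDist (F^[n] B) A := contr _ A (hiter n).1 (hiter n).2 hA hAne'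
        _ ≤ s * (s ^ n * hausdorffDist B A) := by
            exact mul_le_mul_of_nonneg_left ih hs0.le
        _ = s ^ (n + 1) * hausdorffDist B A := by ring
  refine ⟨fun k => ?_, hbound⟩
  calc hausdorffDist (F^[k] B) A ≤ s ^ k * hausdorffDist B A := hk k
    _ ≤ s ^ k * (hausdorffDist (F B) B / (1 - s)) :=
        mul_le_mul_of_nonneg_left hbound (pow_nonneg hs0.le k)
    _ = (s ^ k / (1 - s)) * hausdorffDist (F B) B := by ring
end

section
/- Assume (M1) there exists s > 0 such that ∫_Λ |f(τ(λ,x)) − f(τ(λ,y))| dq_x(λ) ≤ s d(x,y) for every 1-Lipschitz f : X → ℝ; (H2) λ ↦ τ(λ,x) is r-Lipschitz uniformly in x; (H3) x ↦ q_x is t-Lipschitz from X to (P(Λ), d_MK). Then for every 1-Lipschitz f : X → ℝ, the function B_q(f) is (s + r·t)-Lipschitz. -/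
open MeasureTheory

/-- The Monge–Kantorovich (Wasserstein-1) distance between two measures, defined as the
supremum over 1-Lipschitz functions of the difference of the integrals. -/
noncomputable def dMK {α : Type*} [MetricSpace α] [MeasurableSpace α]
    (μ ν : Measure α) : ℝ :=
  ⨆ f : {f : α → ℝ // LipschitzWith 1 f}, (∫ z, f.1 z ∂μ - ∫ z, f.1 z ∂ν)

lemma lip_integrable {Λ : Type*} [MetricSpace Λ] [CompactSpace Λ] [MeasurableSpace Λ]
    [BorelSpace Λ] (μ : Measure Λ) [IsProbabilityMeasure μ] (g : Λ → ℝ)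
    (hg : Continuous g) : Integrable g μ :=
  hg.integrable_of_hasCompactSupport (HasCompactSupport.of_compactSpace g)

lemma dMK_bddAbove {Λ : Type*} [MetricSpace Λ] [CompactSpace Λ] [MeasurableSpace Λ]
    [BorelSpace Λ] (μ ν : Measure Λ) [IsProbabilityMeasure μ] [IsProbabilityMeasure ν] :
    BddAbove (Set.range fun f : {f : Λ → ℝ // LipschitzWith 1 f} =>
      ∫ z, f.1 z ∂μ - ∫ z, f.1 z ∂ν) := by
  rcases isEmpty_or_nonempty Λ with h | ⟨⟨l₀⟩⟩
  · refine ⟨0, ?_⟩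
    rintro x ⟨f, rfl⟩
    simp [Measure.eq_zero_of_isEmpty μ, Measure.eq_zero_of_isEmpty ν]
  · set D := Metric.diam (Set.univ : Set Λ) with hD
    refine ⟨2 * D, ?_⟩
    rintro x ⟨f, rfl⟩
    have hint : ∀ (κ : Measure Λ) [IsProbabilityMeasure κ],
        ∫ z, f.1 z ∂κ = ∫ z, (f.1 z - f.1 l₀) ∂κ + f.1 l₀ := by
      intro κ hκ
      rw [integral_sub (lip_integrable κ f.1 f.2.continuous) (integrable_const _)]
      simp
    have hb : ∀ (κ : Measure Λ) [IsProbabilityMeasure κ],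
        |∫ z, (f.1 z - f.1 l₀) ∂κ| ≤ D := by
      intro κ hκ
      have : |∫ z, (f.1 z - f.1 l₀) ∂κ| ≤ ∫ z, |f.1 z - f.1 l₀| ∂κ := by
        simpa [Real.norm_eq_abs] using norm_integral_le_integral_norm (μ := κ)
          (f := fun z => f.1 z - f.1 l₀)
      refine this.trans ?_
      have : ∫ z, |f.1 z - f.1 l₀| ∂κ ≤ ∫ _z, D ∂κ := by
        apply integral_mono_of_nonneg
        · filter_upwards with z using abs_nonneg _
        · exact integrable_const _
        · filter_upwards with z
          have := f.2.dist_le_mul z l₀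
          simp only [NNReal.coe_one, one_mul] at this
          calc |f.1 z - f.1 l₀| = dist (f.1 z) (f.1 l₀) := by rw [Real.dist_eq]
            _ ≤ dist z l₀ := this
            _ ≤ D := Metric.dist_le_diam_of_mem (Metric.isBounded_of_compactSpace)
                (Set.mem_univ _) (Set.mem_univ _)
      simpa using this
    have h1 := hb μ
    have h2 := hb ν
    show ∫ z, f.1 z ∂μ - ∫ z, f.1 z ∂ν ≤ 2 * D
    rw [hint μ, hint ν]
    have := abs_le.1 h1
    have := abs_le.1 h2
    linarith [(abs_le.1 h1).2, (abs_le.1 h2).1]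

lemma le_dMK {Λ : Type*} [MetricSpace Λ] [CompactSpace Λ] [MeasurableSpace Λ]
    [BorelSpace Λ] (μ ν : Measure Λ) [IsProbabilityMeasure μ] [IsProbabilityMeasure ν]
    (g : Λ → ℝ) (hg : LipschitzWith 1 g) :
    ∫ z, g z ∂μ - ∫ z, g z ∂ν ≤ dMK μ ν :=
  le_ciSup (dMK_bddAbove μ ν) (⟨g, hg⟩ : {f : Λ → ℝ // LipschitzWith 1 f})

lemma lip_integral_diff_le {Λ : Type*} [MetricSpace Λ] [CompactSpace Λ] [MeasurableSpace Λ]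
    [BorelSpace Λ] (μ ν : Measure Λ) [IsProbabilityMeasure μ] [IsProbabilityMeasure ν]
    (g : Λ → ℝ) (hgc : Continuous g) (c : ℝ) (hc : 0 ≤ c)
    (hg : ∀ a b, dist (g a) (g b) ≤ c * dist a b) :
    ∫ z, g z ∂μ - ∫ z, g z ∂ν ≤ c * dMK μ ν := by
  rcases hc.eq_or_lt with h | h
  · -- c = 0 : g is constant (or Λ empty)
    rcases isEmpty_or_nonempty Λ with hΛ | ⟨⟨l₀⟩⟩
    · simp [Measure.eq_zero_of_isEmpty μ, Measure.eq_zero_of_isEmpty ν, ← h]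
    · have hconst : ∀ z, g z = g l₀ := by
        intro z
        have := hg z l₀
        rw [← h, zero_mul] at this
        have : dist (g z) (g l₀) = 0 := le_antisymm this dist_nonneg
        exact dist_eq_zero.1 this
      have : ∀ (κ : Measure Λ) [IsProbabilityMeasure κ], ∫ z, g z ∂κ = g l₀ := by
        intro κ hκ
        rw [show g = fun _ => g l₀ from funext hconst]
        simp
      rw [this μ, this ν, ← h]
      simp
  · -- c > 0
    set h₁ : Λ → ℝ := fun z => c⁻¹ * g z with hh₁
    have hlip : LipschitzWith 1 h₁ := by
      apply LipschitzWith.of_dist_le_mul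
      intro a b
      have : dist (h₁ a) (h₁ b) = c⁻¹ * dist (g a) (g b) := by
        simp only [hh₁, Real.dist_eq, ← mul_sub, abs_mul, abs_of_pos (inv_pos.2 h)]
      rw [this, NNReal.coe_one, one_mul]
      calc c⁻¹ * dist (g a) (g b) ≤ c⁻¹ * (c * dist a b) := by
            exact mul_le_mul_of_nonneg_left (hg a b) (inv_pos.2 h).le
        _ = dist a b := by field_simp
    have key := le_dMK μ ν h₁ hlip
    have hμ : ∫ z, h₁ z ∂μ = c⁻¹ * ∫ z, g z ∂μ := integral_const_mul _ _
    have hν : ∫ z, h₁ z ∂ν = c⁻¹ * ∫ z, g z ∂ν := integral_const_mul _ _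
    rw [hμ, hν] at key
    have := mul_le_mul_of_nonneg_left key hc
    rw [mul_sub] at this
    calc ∫ z, g z ∂μ - ∫ z, g z ∂ν
        = c * (c⁻¹ * ∫ z, g z ∂μ) - c * (c⁻¹ * ∫ z, g z ∂ν) := by field_simp
      _ ≤ c * dMK μ ν := this

/-- Under M1 (with constant `s`), H2 (with constant `r`) and H3 (with constant `t`),
for every 1-Lipschitz `f : X → ℝ` the function `B_q(f)` is `(s + r·t)`-Lipschitz. -/
theorem transfer_of_lipschitz_is_lipschitz
    {X Λ : Type*} [MetricSpace X] [CompactSpace X]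
    [MetricSpace Λ] [CompactSpace Λ] [MeasurableSpace Λ] [BorelSpace Λ]
    (τ : Λ → X → X) (hτ : Continuous fun p : Λ × X => τ p.1 p.2)
    (q : X → Measure Λ) (hq_prob : ∀ x, IsProbabilityMeasure (q x))
    (s r t : ℝ) (hs : 0 < s) (hr : 0 ≤ r) (ht : 0 ≤ t)
    (hM1 : ∀ f : X → ℝ, LipschitzWith 1 f → ∀ x y : X,
      ∫ l, |f (τ l x) - f (τ l y)| ∂(q x) ≤ s * dist x y)
    (hH2 : ∀ (x : X) (l₁ l₂ : Λ), dist (τ l₁ x) (τ l₂ x) ≤ r * dist l₁ l₂)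
    (hH3 : ∀ x y : X, dMK (q x) (q y) ≤ t * dist x y)
    (f : X → ℝ) (hf : LipschitzWith 1 f) :
    ∀ x y : X,
      |(∫ l, f (τ l x) ∂(q x)) - ∫ l, f (τ l y) ∂(q y)| ≤ (s + r * t) * dist x y := by
  intro x y
  haveI := hq_prob x
  haveI := hq_prob y
  have hcont : ∀ z : X, Continuous fun l => f (τ l z) := fun z =>
    hf.continuous.comp (hτ.comp (Continuous.prodMk_left z))
  set A := ∫ l, f (τ l x) ∂(q x)
  set B := ∫ l, f (τ l y) ∂(q y)
  set C := ∫ l, f (τ l y) ∂(q x) with hC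
  -- first part
  have h1 : |A - C| ≤ s * dist x y := by
    have hAC : A - C = ∫ l, (f (τ l x) - f (τ l y)) ∂(q x) := by
      rw [integral_sub (lip_integrable _ _ (hcont x)) (lip_integrable _ _ (hcont y))]
    rw [hAC]
    have : |∫ l, (f (τ l x) - f (τ l y)) ∂(q x)| ≤ ∫ l, |f (τ l x) - f (τ l y)| ∂(q x) := by
      simpa [Real.norm_eq_abs] using norm_integral_le_integral_norm (μ := q x)
        (f := fun l => f (τ l x) - f (τ l y))
    exact this.trans (hM1 f hf x y)
  -- second part
  have hg : ∀ a b : Λ, dist (f (τ a y)) (f (τ b y)) ≤ r * dist a b := by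
    intro a b
    have h₁ := hf.dist_le_mul (τ a y) (τ b y)
    simp only [NNReal.coe_one, one_mul] at h₁
    exact h₁.trans (hH2 y a b)
  have h2a : C - B ≤ r * dMK (q x) (q y) :=
    lip_integral_diff_le (q x) (q y) _ (hcont y) r hr hg
  have h2b : B - C ≤ r * dMK (q x) (q y) := by
    have := lip_integral_diff_le (q x) (q y) (fun l => -(f (τ l y))) (hcont y).neg r hr
      (by intro a b; simpa [dist_comm] using hg a b)
    rw [integral_neg, integral_neg] at this
    linarith
  have h2 : |C - B| ≤ r * (t * dist x y) := by
    have hd := hH3 x y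
    have := abs_sub_le_iff.2 ⟨h2a, h2b⟩
    exact this.trans (mul_le_mul_of_nonneg_left hd hr)
  calc |A - B| ≤ |A - C| + |C - B| := abs_sub_le A C B
    _ ≤ s * dist x y + r * (t * dist x y) := add_le_add h1 h2
    _ = (s + r * t) * dist x y := by ring
end

section
/- Under hypotheses W1, CP1, H2, H3, H4 (with s + r·M·t < 1), the attractor is contained in the support of the invariant measure: A ⊆ supp(μ). Combined with the reverse inclusion, supp(μ) = A. -/
open MeasureTheory Metric Filter

/-- The Markov operator of an IFSm. -/
noncomputable def markovOp {X Λ : Type*} [MeasurableSpace X] [MeasurableSpace Λ]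
    (τ : Λ → X → X) (q : X → Measure Λ) : Measure X → Measure X :=
  fun μ => μ.bind fun x => (q x).map fun l => τ l x

/-- The composition `τ_{λ_{k-1}} ∘ ⋯ ∘ τ_{λ_0}` associated with a word `λ^k ∈ Λ^k`. -/
def compIFS {X Λ : Type*} (τ : Λ → X → X) : (k : ℕ) → (Fin k → Λ) → X → X
  | 0, _, x => x
  | (k + 1), lam, x => compIFS τ k (fun i => lam i.succ) (τ (lam 0) x)

/-- The (topological) support of a measure: the set of points all of whose open
neighbourhoods have positive measure. -/
def measureSupport {α : Type*} [TopologicalSpace α] [MeasurableSpace α]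
    (μ : Measure α) : Set α :=
  {x | ∀ U : Set α, IsOpen U → x ∈ U → 0 < μ U}

/-!
The support `S` of `μ` is a nonempty compact set fixed by the Hutchinson operator. Invariance of
`μ` and full support of every `q x` push positive mass from a neighbourhood of `x ∈ S` to every
neighbourhood of `τ λ x`, so `τ λ '' S ⊆ S`; conversely the open complement of the compact set
`⋃ λ, τ λ '' S` receives no mass from the conull set `S`, so it misses `S`. A nonempty compact
fixed point of the Hutchinson operator is at Hausdorff distance `0` from the attractor, hence
equal to it.
-/

open Set

lemma measureSupport_eq_support {α : Type*} [TopologicalSpace α] [MeasurableSpace α]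
    (μ : Measure α) : measureSupport μ = μ.support := by
  ext x
  simp only [measureSupport, Measure.support_eq_forall_isOpen, mem_ofPred_eq]
  exact forall_congr' fun U => imp.swap

lemma lintegral_pos_of_mem_support {α : Type*} [TopologicalSpace α] [MeasurableSpace α]
    {μ : Measure α} {f : α → ENNReal} (hf : Measurable f) {x : α} (hx : x ∈ μ.support)
    {W : Set α} (hW : W ∈ nhds x) (hfW : ∀ y ∈ W, 0 < f y) : 0 < ∫⁻ y, f y ∂μ := by
  rw [lintegral_pos_iff_support hf]
  exact ((Measure.mem_support_iff_forall x).mp hx W hW).trans_le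
    (measure_mono fun y hy => (hfW y hy).ne')

def hutchinson {X Λ : Type*} (τ : Λ → X → X) (C : Set X) : Set X :=
  ⋃ lam, τ lam '' C

lemma isCompact_hutchinson {X Λ : Type*} [TopologicalSpace X] [TopologicalSpace Λ]
    [CompactSpace Λ] {τ : Λ → X → X} (hτ : Continuous fun p : Λ × X => τ p.1 p.2) {C : Set X}
    (hC : IsCompact C) : IsCompact (hutchinson τ C) := by
  have : hutchinson τ C = (fun p : Λ × X => τ p.1 p.2) '' (univ ×ˢ C) := by
    ext; simp [hutchinson]
  exact this ▸ (isCompact_univ.prod hC).image hτ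

section Markov

variable {X Λ : Type*} [TopologicalSpace X] [MeasurableSpace X] [BorelSpace X]
  [TopologicalSpace Λ] [MeasurableSpace Λ] [OpensMeasurableSpace Λ]
  {τ : Λ → X → X} {q : X → Measure Λ} {μ : Measure X}

lemma hutchinson_support_subset (hτ : Continuous fun p : Λ × X => τ p.1 p.2)
    (hq_meas : Measurable fun x => (q x).map fun l => τ l x)
    (hq_pos : ∀ (x : X) (U : Set Λ), IsOpen U → U.Nonempty → 0 < q x U)
    (hμinv : markovOp τ q μ = μ) :
    hutchinson τ μ.support ⊆ μ.support := by
  rintro _ ⟨_, ⟨lam, rfl⟩, x, hx, rfl⟩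
  refine (Measure.mem_support_iff_forall _).mpr fun U hU => ?_
  obtain ⟨V, W, hVo, hWo, hlamV, hxW, hVW⟩ :=
    isOpen_prod_iff.mp (hτ.isOpen_preimage _ isOpen_interior) lam x
      (show τ lam x ∈ interior U from mem_interior_iff_mem_nhds.mpr hU)
  have hUm : MeasurableSet (interior U) := isOpen_interior.measurableSet
  refine (measure_mono interior_subset).trans_lt' ?_
  rw [← hμinv, markovOp, Measure.bind_apply hUm hq_meas.aemeasurable]
  refine lintegral_pos_of_mem_support ((Measure.measurable_coe hUm).comp hq_meas) hx
    (hWo.mem_nhds hxW) fun y hy => ?_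
  rw [Measure.map_apply (Continuous.uncurry_right _ hτ).measurable hUm]
  exact (hq_pos y V hVo ⟨lam, hlamV⟩).trans_le
    (measure_mono fun l hl => hVW (mk_mem_prod hl hy))

lemma support_subset_hutchinson [T2Space X] [HereditarilyLindelofSpace X] [CompactSpace Λ]
    (hτ : Continuous fun p : Λ × X => τ p.1 p.2)
    (hq_meas : Measurable fun x => (q x).map fun l => τ l x)
    (hμinv : markovOp τ q μ = μ) (hS : IsCompact μ.support) :
    μ.support ⊆ hutchinson τ μ.support := by
  have hK : IsCompact (hutchinson τ μ.support) := isCompact_hutchinson hτ hS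
  have hKc : MeasurableSet (hutchinson τ μ.support)ᶜ := hK.isClosed.isOpen_compl.measurableSet
  refine Measure.support_subset_of_isClosed hK.isClosed (mem_ae_iff.mpr ?_)
  suffices markovOp τ q μ (hutchinson τ μ.support)ᶜ = 0 by rwa [hμinv] at this
  rw [markovOp, Measure.bind_apply hKc hq_meas.aemeasurable]
  refine (lintegral_congr_ae ?_).trans lintegral_zero
  filter_upwards [Measure.support_mem_ae] with x hx
  rw [Measure.map_apply (Continuous.uncurry_right _ hτ).measurable hKc]
  exact measure_mono_null (fun l hl => hl (mem_iUnion.mpr ⟨l, x, hx, rfl⟩)) measure_empty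

end Markov

lemma eq_of_hausdorffDist_iterate_tendsto_zero {X : Type*} [MetricSpace X]
    {F : Set X → Set X} {A B : Set X} (hA : IsCompact A) (hAne : A.Nonempty)
    (hB : IsCompact B) (hBne : B.Nonempty) (hfix : F B = B)
    (hconv : Tendsto (fun k => hausdorffDist (F^[k] B) A) atTop (nhds 0)) : B = A := by
  have hdist : hausdorffDist B A = 0 :=
    tendsto_nhds_unique tendsto_const_nhds (by simpa only [Function.iterate_fixed hfix] using hconv)
  exact (hB.isClosed.hausdorffDist_zero_iff_eq hA.isClosed
    (hausdorffEDist_ne_top_of_nonempty_of_bounded hBne hAne hB.isBounded hA.isBounded)).mp hdist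

theorem attractor_subset_support_general
    {X Λ : Type*} [MetricSpace X] [CompactSpace X] [MeasurableSpace X] [BorelSpace X]
    [MetricSpace Λ] [CompactSpace Λ] [MeasurableSpace Λ] [BorelSpace Λ]
    (τ : Λ → X → X) (hτ : Continuous fun p : Λ × X => τ p.1 p.2)
    (q : X → Measure Λ)
    (hq_meas : Measurable fun x => (q x).map fun l => τ l x)
    (hH4 : ∀ (x : X) (U : Set Λ), IsOpen U → U.Nonempty → 0 < q x U)
    (A : Set X) (hA : IsCompact A) (hAne : A.Nonempty)
    (hAattr : ∀ B : Set X, IsCompact B → B.Nonempty →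
      Tendsto (fun k => hausdorffDist ((fun C => ⋃ lam : Λ, τ lam '' C)^[k] B) A)
        atTop (nhds 0))
    (μ : Measure X) (hμ : IsProbabilityMeasure μ) (hμinv : markovOp τ q μ = μ) :
    A ⊆ measureSupport μ ∧ measureSupport μ = A := by
  rw [measureSupport_eq_support]
  have hS : IsCompact μ.support := Measure.isClosed_support.isCompact
  have hSne : μ.support.Nonempty := Measure.nonempty_support hμ.ne_zero
  have hfix : hutchinson τ μ.support = μ.support :=
    (hutchinson_support_subset hτ hq_meas hH4 hμinv).antisymm
      (support_subset_hutchinson hτ hq_meas hμinv hS)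
  have hSA : μ.support = A :=
    eq_of_hausdorffDist_iterate_tendsto_zero hA hAne hS hSne hfix (hAattr _ hS hSne)
  exact ⟨hSA.symm.subset, hSA⟩

/-- Under W1, CP1, H2, H3, H4 (with `s + r·M·t < 1`), the support of the unique invariant
measure `μ` contains the attractor `A`; combined with the reverse inclusion, `supp(μ) = A`. -/
theorem attractor_subset_support
    {X Λ : Type*} [MetricSpace X] [CompactSpace X] [MeasurableSpace X] [BorelSpace X]
    [MetricSpace Λ] [CompactSpace Λ] [MeasurableSpace Λ] [BorelSpace Λ]
    (τ : Λ → X → X) (hτ : Continuous fun p : Λ × X => τ p.1 p.2)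
    (q : X → Measure Λ) (hq_prob : ∀ x, IsProbabilityMeasure (q x))
    (hq_meas : Measurable fun x => (q x).map fun l => τ l x)
    (hq_cont : ∀ g : Λ → ℝ, Continuous g → Continuous fun x => ∫ l, g l ∂(q x))
    (M : ℕ) (hM : 1 ≤ M) (s r t : ℝ) (hs0 : 0 < s) (hs1 : s < 1) (hr : 0 ≤ r) (ht : 0 ≤ t)
    (hcontr : s + r * (M : ℝ) * t < 1)
    (hW1 : ∀ (lam : Λ) (x y : X), dist (τ lam x) (τ lam y) ≤ dist x y)
    (hCP1 : ∀ (lams : Fin M → Λ) (x y : X),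
      dist (compIFS τ M lams x) (compIFS τ M lams y) ≤ s * dist x y)
    (hH2 : ∀ (x : X) (l₁ l₂ : Λ), dist (τ l₁ x) (τ l₂ x) ≤ r * dist l₁ l₂)
    (hH3 : ∀ x y : X, dMK (q x) (q y) ≤ t * dist x y)
    (hH4 : ∀ (x : X) (U : Set Λ), IsOpen U → U.Nonempty → 0 < q x U)
    (A : Set X) (hA : IsCompact A) (hAne : A.Nonempty)
    (hAfix : (⋃ lam : Λ, τ lam '' A) = A)
    (hAattr : ∀ B : Set X, IsCompact B → B.Nonempty →
      Tendsto (fun k => hausdorffDist ((fun C => ⋃ lam : Λ, τ lam '' C)^[k] B) A)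
        atTop (nhds 0))
    (μ : Measure X) (hμ : IsProbabilityMeasure μ) (hμinv : markovOp τ q μ = μ) :
    A ⊆ measureSupport μ ∧ measureSupport μ = A :=
  attractor_subset_support_general τ hτ q hq_meas hH4 A hA hAne hAattr μ hμ hμinv
end

section
/- Let A : X → ℝ be Lipschitz with constant Lip(A), let μ ∈ P(Λ) be fixed, and assume each τ_λ is s-Lipschitz (uniformly in λ) and ∫_Λ e^{A(τ_λ(x))} dμ(λ) = 1 for all x. Define q_x by dq_x(λ) = e^{A(τ_λ(x))} dμ(λ). Then x ↦ q_x is Lipschitz from (X,d) to (P(Λ), d_MK) with constant diam(Λ) · e^{‖A‖_∞} · Lip(A) · s. -/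
open MeasureTheory

/-!
Against a test function `g`, the difference `q_x - q_y` is the signed density
`e^{A(τ_λ x)} - e^{A(τ_λ y)}`, which has total mass zero by the normalization. So `g` may be
replaced by `g - g(λ₀)`, which a 1-Lipschitz `g` keeps below `diam Λ`, while the density is at
most `e^{‖A‖_∞} · Lip(A) · s · d(x, y)` because `exp` is `e^M`-Lipschitz on `(-∞, M]`.
-/

lemma Real.abs_exp_sub_exp_le {a b M : ℝ} (ha : a ≤ M) (hb : b ≤ M) :
    |Real.exp a - Real.exp b| ≤ Real.exp M * |a - b| := by
  wlog hba : b ≤ a generalizing a b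
  · rw [abs_sub_comm, abs_sub_comm a]
    exact this hb ha (le_of_not_ge hba)
  have hexp : Real.exp a - Real.exp b = Real.exp a * (1 - Real.exp (b - a)) := by
    rw [mul_sub, mul_one, ← Real.exp_add, add_sub_cancel]
  have hlin : 1 - Real.exp (b - a) ≤ a - b := by linarith [Real.add_one_le_exp (b - a)]
  rw [abs_of_nonneg (sub_nonneg.2 (Real.exp_le_exp.2 hba)), abs_of_nonneg (sub_nonneg.2 hba),
    hexp]
  exact mul_le_mul (Real.exp_le_exp.2 ha) hlin
    (sub_nonneg.2 (Real.exp_le_one_iff.2 (sub_nonpos.2 hba))) (Real.exp_pos M).le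

lemma integral_withDensity_ofReal {Λ : Type*} [MeasurableSpace Λ] {μ : Measure Λ}
    {ρ : Λ → ℝ} (hρ : AEMeasurable ρ μ) (hρ_nonneg : ∀ l, 0 ≤ ρ l) (g : Λ → ℝ) :
    ∫ l, g l ∂μ.withDensity (fun l => ENNReal.ofReal (ρ l)) = ∫ l, ρ l * g l ∂μ := by
  rw [integral_withDensity_eq_integral_toReal_smul₀ hρ.ennreal_ofReal
    (ae_of_all _ fun _ => ENNReal.ofReal_lt_top)]
  simp only [ENNReal.toReal_ofReal (hρ_nonneg _), smul_eq_mul]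

section BoundedSpace

variable {Λ : Type*} [PseudoMetricSpace Λ] [BoundedSpace Λ]

lemma LipschitzWith.abs_sub_le_diam {g : Λ → ℝ} (hg : LipschitzWith 1 g) (l l₀ : Λ) :
    |g l - g l₀| ≤ Metric.diam (Set.univ : Set Λ) := by
  simpa [← Real.dist_eq] using (hg.dist_le_mul l l₀).trans
    (by simpa using Metric.dist_le_diam_of_mem (Bornology.isBounded_univ.2 ‹_›) trivial trivial)

variable [MeasurableSpace Λ] [OpensMeasurableSpace Λ] {μ : Measure Λ}

lemma LipschitzWith.integrable_mul {K : NNReal} {ρ g : Λ → ℝ} (hρ : Integrable ρ μ)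
    (hg : LipschitzWith K g) : Integrable (fun l => ρ l * g l) μ := by
  obtain ⟨C, hC⟩ := (hg.isBounded_image (Bornology.isBounded_univ.2 ‹_›)).exists_norm_le
  exact hρ.mul_bdd hg.continuous.aestronglyMeasurable
    (ae_of_all _ fun l => hC _ ⟨l, trivial, rfl⟩)

variable [IsProbabilityMeasure μ]

lemma integral_mul_le_diam_mul_of_integral_eq_zero {ρ g : Λ → ℝ} {ε : ℝ}
    (hρ : Integrable ρ μ) (hρ_zero : ∫ l, ρ l ∂μ = 0) (hρε : ∀ l, |ρ l| ≤ ε)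
    (hg : LipschitzWith 1 g) :
    ∫ l, ρ l * g l ∂μ ≤ Metric.diam (Set.univ : Set Λ) * ε := by
  obtain ⟨l₀⟩ := nonempty_of_isProbabilityMeasure μ
  have hg₀ := hg.sub (LipschitzWith.const' (g l₀) (K := 0))
  have hsplit : ∫ l, ρ l * g l ∂μ = ∫ l, ρ l * (g l - g l₀) ∂μ := by
    calc ∫ l, ρ l * g l ∂μ = ∫ l, ρ l * (g l - g l₀) + ρ l * g l₀ ∂μ := by
          congr 1 with l; ring
      _ = ∫ l, ρ l * (g l - g l₀) ∂μ := by
          rw [integral_add (hg₀.integrable_mul hρ) (hρ.mul_const _), integral_mul_const,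
            hρ_zero, zero_mul, add_zero]
  have hbound : ∀ l, ‖ρ l * (g l - g l₀)‖ ≤ Metric.diam (Set.univ : Set Λ) * ε := fun l => by
    rw [norm_mul, Real.norm_eq_abs, Real.norm_eq_abs, mul_comm]
    exact mul_le_mul (hg.abs_sub_le_diam l l₀) (hρε l) (abs_nonneg _) Metric.diam_nonneg
  have := norm_integral_le_of_norm_le_const (μ := μ) (ae_of_all _ hbound)
  rw [probReal_univ, mul_one] at this
  exact hsplit ▸ (le_abs_self _).trans this

end BoundedSpace

theorem dMK_withDensity_le {Λ : Type*} [MetricSpace Λ] [BoundedSpace Λ] [MeasurableSpace Λ]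
    [OpensMeasurableSpace Λ] {μ : Measure Λ} [IsProbabilityMeasure μ] {ρ₁ ρ₂ : Λ → ℝ} {ε : ℝ}
    (hρ₁ : Integrable ρ₁ μ) (hρ₂ : Integrable ρ₂ μ) (hρ₁_nonneg : ∀ l, 0 ≤ ρ₁ l)
    (hρ₂_nonneg : ∀ l, 0 ≤ ρ₂ l) (hmass : ∫ l, ρ₁ l ∂μ = ∫ l, ρ₂ l ∂μ)
    (hρε : ∀ l, |ρ₁ l - ρ₂ l| ≤ ε) :
    dMK (μ.withDensity fun l => ENNReal.ofReal (ρ₁ l))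
        (μ.withDensity fun l => ENNReal.ofReal (ρ₂ l)) ≤
      Metric.diam (Set.univ : Set Λ) * ε := by
  have : Nonempty {g : Λ → ℝ // LipschitzWith 1 g} := ⟨⟨0, LipschitzWith.const' 0⟩⟩
  refine ciSup_le fun ⟨g, hg⟩ => ?_
  rw [integral_withDensity_ofReal hρ₁.aemeasurable hρ₁_nonneg,
    integral_withDensity_ofReal hρ₂.aemeasurable hρ₂_nonneg,
    ← integral_sub (hg.integrable_mul hρ₁) (hg.integrable_mul hρ₂)]
  simp_rw [← sub_mul]
  exact integral_mul_le_diam_mul_of_integral_eq_zero (hρ₁.sub hρ₂)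
    (by rw [integral_sub hρ₁ hρ₂, hmass, sub_self]) hρε hg

theorem gibbs_family_is_lipschitz_general
    {X Λ : Type*} [MetricSpace X] [CompactSpace X]
    [MetricSpace Λ] [CompactSpace Λ] [MeasurableSpace Λ] [BorelSpace Λ]
    (τ : Λ → X → X) (hτ : Continuous fun p : Λ × X => τ p.1 p.2)
    (s : ℝ)
    (hcontr : ∀ (lam : Λ) (x y : X), dist (τ lam x) (τ lam y) ≤ s * dist x y)
    (A : X → ℝ) (LA : ℝ) (hLA : 0 ≤ LA)
    (hA : ∀ x y : X, |A x - A y| ≤ LA * dist x y)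
    (μ : Measure Λ) (hμ : IsProbabilityMeasure μ)
    (hnorm : ∀ x : X, ∫ l, Real.exp (A (τ l x)) ∂μ = 1)
    (q : X → Measure Λ)
    (hq : q = fun x => μ.withDensity fun l => ENNReal.ofReal (Real.exp (A (τ l x)))) :
    ∀ x y : X,
      dMK (q x) (q y) ≤
        Metric.diam (Set.univ : Set Λ) * Real.exp (⨆ z : X, |A z|) * LA * s *
          dist x y := by
  subst hq
  intro x y
  have hA_cont : Continuous A :=
    (LipschitzWith.of_dist_le_mul (K := ⟨LA, hLA⟩) fun a b => hA a b).continuous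
  have hA_le : ∀ z, A z ≤ ⨆ z : X, |A z| := fun z =>
    (le_abs_self _).trans (le_ciSup (isCompact_range hA_cont.abs).bddAbove z)
  have hρ_int : ∀ z, Integrable (fun l => Real.exp (A (τ l z))) μ := fun z =>
    (Real.continuous_exp.comp (hA_cont.comp (hτ.comp (Continuous.prodMk_left z)))
      ).integrable_of_hasCompactSupport (HasCompactSupport.of_compactSpace _)
  have hρ_close : ∀ l, |Real.exp (A (τ l x)) - Real.exp (A (τ l y))| ≤
      Real.exp (⨆ z : X, |A z|) * (LA * (s * dist x y)) := fun l =>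
    (Real.abs_exp_sub_exp_le (hA_le _) (hA_le _)).trans <| mul_le_mul_of_nonneg_left
      ((hA _ _).trans (mul_le_mul_of_nonneg_left (hcontr l x y) hLA)) (Real.exp_pos _).le
  calc _ ≤ Metric.diam (Set.univ : Set Λ) *
        (Real.exp (⨆ z : X, |A z|) * (LA * (s * dist x y))) :=
        dMK_withDensity_le (hρ_int x) (hρ_int y) (fun _ => (Real.exp_pos _).le)
          (fun _ => (Real.exp_pos _).le) ((hnorm x).trans (hnorm y).symm) hρ_close
    _ = _ := by ring

/-- Thermodynamic-formalism example: if `A : X → ℝ` is `LA`-Lipschitz, `μ ∈ P(Λ)` is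
fixed, each `τ_λ` is `s`-Lipschitz uniformly in `λ`, and
`∫_Λ e^{A(τ_λ(x))} dμ(λ) = 1` for all `x`, then the family
`dq_x(λ) = e^{A(τ_λ(x))} dμ(λ)` is Lipschitz from `X` to `(P(Λ), d_MK)` with constant
`diam(Λ) · e^{‖A‖_∞} · Lip(A) · s`. -/
theorem gibbs_family_is_lipschitz
    {X Λ : Type*} [MetricSpace X] [CompactSpace X]
    [MetricSpace Λ] [CompactSpace Λ] [MeasurableSpace Λ] [BorelSpace Λ]
    (τ : Λ → X → X) (hτ : Continuous fun p : Λ × X => τ p.1 p.2)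
    (s : ℝ) (hs : 0 < s)
    (hcontr : ∀ (lam : Λ) (x y : X), dist (τ lam x) (τ lam y) ≤ s * dist x y)
    (A : X → ℝ) (LA : ℝ) (hLA : 0 ≤ LA)
    (hA : ∀ x y : X, |A x - A y| ≤ LA * dist x y)
    (μ : Measure Λ) (hμ : IsProbabilityMeasure μ)
    (hnorm : ∀ x : X, ∫ l, Real.exp (A (τ l x)) ∂μ = 1)
    (q : X → Measure Λ)
    (hq : q = fun x => μ.withDensity fun l => ENNReal.ofReal (Real.exp (A (τ l x)))) :
    ∀ x y : X,
      dMK (q x) (q y) ≤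
        Metric.diam (Set.univ : Set Λ) * Real.exp (⨆ z : X, |A z|) * LA * s *
          dist x y :=
  gibbs_family_is_lipschitz_general τ hτ s hcontr A LA hLA hA μ hμ hnorm q hq
end

section
/- Let S = (X, (φ_λ)_{λ∈Λ}) be a GIFS of degree m ≥ 2 where each φ_λ : X^m → X satisfies d(φ_λ(x), φ_λ(y)) ≤ Σ_{i=1}^m a_i^λ d(x_i, y_i) with b_λ = Σ_i a_i^λ and s := sup_λ b_λ < 1. Define on Z = X^m (with the max metric) the maps τ_λ(z_1,…,z_m) = (z_2,…,z_m, φ_λ(z)). Then every m-fold composition τ_{λ_m} ∘ ⋯ ∘ τ_{λ_1} is s-Lipschitz on (Z, d_m), even though the individual maps τ_λ need not be contractions (they are 1-Lipschitz). -/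
/-- The skew map `τ_λ(z_1,…,z_m) = (z_2,…,z_m, φ_λ(z))` induced by a GIFS map
`φ_λ : X^m → X`. -/
def gifsShift {X Λ : Type*} {m : ℕ} (φ : Λ → (Fin m → X) → X) (l : Λ)
    (z : Fin m → X) : Fin m → X :=
  fun i => if h : (i : ℕ) + 1 < m then z ⟨(i : ℕ) + 1, h⟩ else φ l z

/-- For a contractive GIFS of degree `m ≥ 2` with `d(φ_λ(x), φ_λ(y)) ≤ Σ_i a_i^λ d(x_i,y_i)`
and `sup_λ Σ_i a_i^λ ≤ s < 1`, the induced maps `τ_λ(z) = (z_2,…,z_m,φ_λ(z))` on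
`Z = X^m` (with the max metric, which is the product metric on `Fin m → X`) are
1-Lipschitz, and every `m`-fold composition `τ_{λ_m} ∘ ⋯ ∘ τ_{λ_1}` is `s`-Lipschitz. -/
theorem gifs_induced_ifs_eventually_contractive
    {X Λ : Type*} [MetricSpace X] [CompactSpace X] [MetricSpace Λ] [CompactSpace Λ]
    (m : ℕ) (hm : 2 ≤ m)
    (φ : Λ → (Fin m → X) → X) (a : Λ → Fin m → ℝ)
    (ha : ∀ (l : Λ) (i : Fin m), 0 ≤ a l i)
    (hφ : ∀ (l : Λ) (z w : Fin m → X),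
      dist (φ l z) (φ l w) ≤ ∑ i, a l i * dist (z i) (w i))
    (s : ℝ) (hs0 : 0 < s) (hs1 : s < 1)
    (hsum : ∀ l : Λ, ∑ i, a l i ≤ s) :
    (∀ (l : Λ) (z w : Fin m → X),
      dist (gifsShift φ l z) (gifsShift φ l w) ≤ dist z w) ∧
    ∀ (lams : Fin m → Λ) (z w : Fin m → X),
      dist (compIFS (gifsShift φ) m lams z) (compIFS (gifsShift φ) m lams w)
        ≤ s * dist z w := by
  -- dist of φ values is at most s * dist z w
  have hphi : ∀ (l : Λ) (z w : Fin m → X), dist (φ l z) (φ l w) ≤ s * dist z w := by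
    intro l z w
    calc dist (φ l z) (φ l w) ≤ ∑ i, a l i * dist (z i) (w i) := hφ l z w
      _ ≤ ∑ i, a l i * dist z w := by
          apply Finset.sum_le_sum
          intro i _
          exact mul_le_mul_of_nonneg_left (dist_le_pi_dist z w i) (ha l i)
      _ = (∑ i, a l i) * dist z w := by rw [Finset.sum_mul]
      _ ≤ s * dist z w := mul_le_mul_of_nonneg_right (hsum l) dist_nonneg
  have hlip : ∀ (l : Λ) (z w : Fin m → X),
      dist (gifsShift φ l z) (gifsShift φ l w) ≤ dist z w := by
    intro l z w
    rw [dist_pi_le_iff dist_nonneg]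
    intro i
    unfold gifsShift
    by_cases h : (i : ℕ) + 1 < m
    · simp only [h, dif_pos]
      exact dist_le_pi_dist z w _
    · simp only [h, dif_neg, not_false_iff]
      calc dist (φ l z) (φ l w) ≤ s * dist z w := hphi l z w
        _ ≤ 1 * dist z w := mul_le_mul_of_nonneg_right hs1.le dist_nonneg
        _ = dist z w := one_mul _
  refine ⟨hlip, ?_⟩
  have key : ∀ (k : ℕ) (lams : Fin k → Λ) (z w : Fin m → X) (i : Fin m),
      (∀ h : (i : ℕ) + k < m,
        compIFS (gifsShift φ) k lams z i = z ⟨(i : ℕ) + k, h⟩ ∧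
        compIFS (gifsShift φ) k lams w i = w ⟨(i : ℕ) + k, h⟩) ∧
      (¬ ((i : ℕ) + k < m) →
        dist (compIFS (gifsShift φ) k lams z i) (compIFS (gifsShift φ) k lams w i)
          ≤ s * dist z w) := by
    intro k
    induction k with
    | zero =>
        intro lams z w i
        refine ⟨fun h => ?_, fun h => absurd (by omega : (i : ℕ) + 0 < m) h⟩
        refine ⟨?_, ?_⟩ <;> · show _ = _; simp only [compIFS]; exact congrArg _ (Fin.ext (by simp only [Fin.val_mk]; omega))
    | succ k ih =>
        intro lams z w i
        have hzw : dist (gifsShift φ (lams 0) z) (gifsShift φ (lams 0) w) ≤ dist z w :=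
          hlip (lams 0) z w
        have hrec := ih (fun j => lams j.succ) (gifsShift φ (lams 0) z)
          (gifsShift φ (lams 0) w) i
        simp only [compIFS]
        constructor
        · intro h
          have hk : (i : ℕ) + k < m := by omega
          obtain ⟨e1, e2⟩ := hrec.1 hk
          rw [e1, e2]
          have hval : ∀ v : Fin m → X,
              gifsShift φ (lams 0) v ⟨(i : ℕ) + k, hk⟩ = v ⟨(i : ℕ) + (k + 1), h⟩ := by
            intro v
            unfold gifsShift
            have h' : (i : ℕ) + k + 1 < m := by omega
            simp only [h', dif_pos]
            exact congrArg v (Fin.ext (by simp only [Fin.val_mk]; omega))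
          exact ⟨hval z, hval w⟩
        · intro h
          by_cases hk : (i : ℕ) + k < m
          · obtain ⟨e1, e2⟩ := hrec.1 hk
            rw [e1, e2]
            have hval : ∀ v : Fin m → X,
                gifsShift φ (lams 0) v ⟨(i : ℕ) + k, hk⟩ = φ (lams 0) v := by
              intro v
              unfold gifsShift
              have h' : ¬ ((i : ℕ) + k + 1 < m) := by omega
              simp only [h', dif_neg, not_false_iff]
            rw [hval z, hval w]
            exact hphi (lams 0) z w
          · calc dist (compIFS (gifsShift φ) k (fun j => lams j.succ)
                    (gifsShift φ (lams 0) z) i)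
                  (compIFS (gifsShift φ) k (fun j => lams j.succ)
                    (gifsShift φ (lams 0) w) i)
                ≤ s * dist (gifsShift φ (lams 0) z) (gifsShift φ (lams 0) w) :=
                  hrec.2 hk
              _ ≤ s * dist z w := mul_le_mul_of_nonneg_left hzw hs0.le
  intro lams z w
  rw [dist_pi_le_iff (mul_nonneg hs0.le dist_nonneg)]
  intro i
  exact (key m lams z w i).2 (by omega)
end
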